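/- Let S be a 3×3 real matrix and E < 0 a real number such that S³ = -E·S. Then for all t ∈ ℝ, exp(t·S) = I + (sinh(t√(-E))/√(-E))·S + ((cosh(t√(-E)) - 1)/(-E))·S². -/

import Mathlib

/-! If `a ^ 3 = ω ^ 2 • a`, then `a ^ (2k+1) = ω ^ (2k) • a` and
`a ^ (2k+2) = ω ^ (2k) • a ^ 2`, so the odd and even halves of the exponential series of `t • a`
are the power series of `sinh (t ω) / ω` times `a` and of `(cosh (t ω) - 1) / ω ^ 2` times `a ^ 2`.
-/

open NormedSpace Nat

section PowThree

variable {R A : Type*} [CommSemiring R] [Semiring A] [Algebra R A] {a : A} {c : R}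

theorem pow_two_mul_add_one_of_pow_three_eq_smul (h : a ^ 3 = c • a) (k : ℕ) :
    a ^ (2 * k + 1) = c ^ k • a := by
  induction k with
  | zero => simp
  | succ k ih =>
    rw [show 2 * (k + 1) + 1 = 2 + (2 * k + 1) by ring, pow_add, ih, mul_smul_comm,
      ← pow_succ, h, smul_smul, ← pow_succ]

theorem pow_two_mul_add_two_of_pow_three_eq_smul (h : a ^ 3 = c • a) (k : ℕ) :
    a ^ (2 * k + 2) = c ^ k • a ^ 2 := by
  rw [pow_succ, pow_two_mul_add_one_of_pow_three_eq_smul h, smul_mul_assoc, ← sq]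

end PowThree

section ExpSeries

variable {A : Type*} [Ring A] [Algebra ℝ A] [TopologicalSpace A] [ContinuousSMul ℝ A]
  {a : A} {ω : ℝ}

theorem hasSum_odd_exp_series_of_pow_three_eq_sq_smul (hω : ω ≠ 0) (h : a ^ 3 = ω ^ 2 • a)
    (t : ℝ) :
    HasSum (fun k => (t ^ (2 * k + 1) / (2 * k + 1)! : ℝ) • a ^ (2 * k + 1))
      ((Real.sinh (t * ω) / ω) • a) := by
  convert ((Real.hasSum_sinh (t * ω)).div_const ω).smul_const a using 2 with k
  rw [pow_two_mul_add_one_of_pow_three_eq_smul h, smul_smul, ← pow_mul]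
  congr 1
  field_simp
  ring

theorem hasSum_even_exp_series_of_pow_three_eq_sq_smul [IsTopologicalAddGroup A] (hω : ω ≠ 0)
    (h : a ^ 3 = ω ^ 2 • a) (t : ℝ) :
    HasSum (fun k => (t ^ (2 * k) / (2 * k)! : ℝ) • a ^ (2 * k))
      (1 + ((Real.cosh (t * ω) - 1) / ω ^ 2) • a ^ 2) := by
  have hcosh := (hasSum_nat_add_iff' 1).mpr (Real.hasSum_cosh (t * ω))
  simp only [Finset.sum_range_one, mul_zero, pow_zero, factorial_zero, cast_one, div_one] at hcosh
  refine (hasSum_nat_add_iff' 1).mp ?_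
  simp only [Finset.sum_range_one, mul_zero, pow_zero, factorial_zero, cast_one, div_one, one_smul,
    add_sub_cancel_left]
  refine ((hcosh.div_const (ω ^ 2)).smul_const (a ^ 2)).congr_fun fun k => ?_
  rw [mul_add_one, pow_two_mul_add_two_of_pow_three_eq_smul h, smul_smul, ← pow_mul]
  congr 1
  field_simp
  ring

theorem exp_smul_eq_of_pow_three_eq_sq_smul [IsTopologicalRing A] [T2Space A] (hω : ω ≠ 0)
    (h : a ^ 3 = ω ^ 2 • a) (t : ℝ) :
    exp (t • a) =
      1 + (Real.sinh (t * ω) / ω) • a + ((Real.cosh (t * ω) - 1) / ω ^ 2) • a ^ 2 := by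
  have hseries := HasSum.even_add_odd (f := fun n => (t ^ n / n ! : ℝ) • a ^ n)
    (hasSum_even_exp_series_of_pow_three_eq_sq_smul hω h t)
    (hasSum_odd_exp_series_of_pow_three_eq_sq_smul hω h t)
  have hterm (n : ℕ) : (n !⁻¹ : ℝ) • (t • a) ^ n = (t ^ n / n ! : ℝ) • a ^ n := by
    rw [smul_pow, smul_smul, inv_mul_eq_div]
  rw [exp_eq_tsum ℝ]
  simp only [hterm]
  rw [hseries.tsum_eq]
  abel

end ExpSeries

theorem stmt_7 (S : Matrix (Fin 3) (Fin 3) ℝ) (E : ℝ) (hE : E < 0)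
    (hS : S ^ 3 = -E • S) (t : ℝ) :
    exp (t • S) =
      1 + (Real.sinh (t * Real.sqrt (-E)) / Real.sqrt (-E)) • S +
        ((Real.cosh (t * Real.sqrt (-E)) - 1) / (-E)) • S ^ 2 := by
  have hsq : Real.sqrt (-E) ^ 2 = -E := Real.sq_sqrt (by linarith)
  have hne : Real.sqrt (-E) ≠ 0 := (Real.sqrt_pos.2 (by linarith)).ne'
  simpa only [hsq] using exp_smul_eq_of_pow_three_eq_sq_smul hne (by rwa [hsq]) t
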